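/- arXiv:1902.05430 — 2 statements merged into one kernel-verified Lean document; each statement's English description precedes it below -/
import Mathlib

section
/- Let X be an abelian duality space of dimension n with H₁(X, ℤ) free abelian, whose cohomology jump loci satisfy the propagation property V^n(X) ⊇ V^{n−1}(X) ⊇ ⋯ ⊇ V^0(X) = {trivial character} and the codimension bound codim V^{n−i}(X) ≥ i for all i ≥ 0. Then the Betti numbers satisfy b_i(X) > 0 for all 0 ≤ i ≤ n, and b₁(X) ≥ n. -/
/-! Propagation carries the trivial character from `V⁰` up to every `Vⁱ` with `i ≤ n`, which
gives `bᵢ > 0`; the codimension bound for `i = n` says `codim V⁰ ≥ n`, and `codim V⁰ ≤ b₁`. -/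

theorem Nat.monotoneOn_Iic_of_le_succ {α : Type*} [Preorder α] {f : ℕ → α} {n : ℕ}
    (hf : ∀ j < n, f j ≤ f (j + 1)) : MonotoneOn f (Set.Iic n) :=
  monotoneOn_of_le_succ Set.ordConnected_Iic fun j _ _ hj =>
    hf j (Order.succ_le_iff.mp hj)

/-- Betti positivity for abelian duality spaces.  Let `X` be an abelian duality space of
dimension `n` with `H₁(X,ℤ)` free abelian, so that `Char(X) ≅ (ℂ*)^{b₁(X)}` with jump loci
`Vⁱ(X) ⊆ Char(X)` (here `Char` is the character variety, `triv` the trivial character, and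
`dim` the dimension of a jump locus; `codim = b₁(X) − dim`).  Assume:
the propagation property `Vⁿ ⊇ V^{n-1} ⊇ ⋯ ⊇ V⁰ = {triv}`, the codimension bound
`codim V^{n-i} ≥ i` for all `0 ≤ i ≤ n`, and that the trivial character lies in `Vⁱ(X)`
precisely when `bᵢ(X) > 0`.  Then `bᵢ(X) > 0` for all `0 ≤ i ≤ n`, and `b₁(X) ≥ n`. -/
theorem abelian_duality_betti
    (n : ℕ)
    (Char : Type) (triv : Char)        -- the character variety and the trivial character
    (V : ℕ → Set Char)                 -- the cohomology jump loci `Vⁱ(X)`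
    (dim : Set Char → ℕ)               -- dimension of subvarieties of `Char(X)`
    (b : ℕ → ℕ)                        -- the Betti numbers of `X`
    (hV0 : V 0 = {triv})
    (hprop : ∀ j, j < n → V j ⊆ V (j + 1))                       -- propagation
    (hcodim : ∀ i, i ≤ n → dim (V (n - i)) + i ≤ b 1)            -- codim `V^{n-i} ≥ i`
    (hbetti : ∀ i, 0 < b i ↔ triv ∈ V i) :
    (∀ i, i ≤ n → 0 < b i) ∧ n ≤ b 1 := by
  have htriv : ∀ i ≤ n, triv ∈ V i := fun i hi =>
    Nat.monotoneOn_Iic_of_le_succ hprop (Set.mem_Iic.2 (Nat.zero_le n)) hi (Nat.zero_le i)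
      (hV0 ▸ rfl)
  have hcodim_V0 : dim (V 0) + n ≤ b 1 := by simpa using hcodim n le_rfl
  exact ⟨fun i hi => (hbetti i).2 (htriv i hi), by omega⟩
end

section
/- Let A be an abelian variety of dimension g and F a constructible complex on A whose jump loci satisfy Schnell's bound codim V^i(A, F) ≥ |2i| for all i ∈ ℤ. Then for generic ρ ∈ Char(A) ≅ (ℂ*)^{2g}, the twisted hypercohomology H^i(A, F ⊗ L_ρ) vanishes for all i ≠ 0, and hence χ(A, F) = dim H^0(A, F ⊗ L_ρ) ≥ 0 for such generic ρ. -/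
open Finset

/-!
Outside the finitely many jump loci `Vⁱ` with `0 < |i| ≤ N` (beyond `N` the cohomology vanishes
identically) all `Hⁱ(A, F ⊗ L_ρ)` with `i ≠ 0` vanish. Schnell's bound gives each such locus
codimension at least `2`, so their union is a proper Zariski closed subset, hence misses some `ρ`.
At any `ρ` off it the Euler characteristic, which does not depend on `ρ`, collapses to the single
term `dim H⁰(A, F ⊗ L_ρ) ≥ 0`.
-/

theorem closed_and_le_codim_sup' {X ι : Type*} {ZClosed : Set X → Prop} {codim : Set X → ℕ∞}
    (hunion : ∀ S T : Set X, ZClosed S → ZClosed T → ZClosed (S ∪ T))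
    (hcodim_union : ∀ S T : Set X, min (codim S) (codim T) ≤ codim (S ∪ T))
    {k : ℕ∞} {s : Finset ι} (hs : s.Nonempty) {V : ι → Set X}
    (hV : ∀ i ∈ s, ZClosed (V i) ∧ k ≤ codim (V i)) :
    ZClosed (s.sup' hs V) ∧ k ≤ codim (s.sup' hs V) :=
  sup'_induction (p := fun S => ZClosed S ∧ k ≤ codim S) hs V
    (fun S hS T hT => ⟨hunion S T hS.1 hT.1, (le_min hS.2 hT.2).trans (hcodim_union S T)⟩) hV

theorem sum_neg_one_zpow_mul_eq_of_eq_zero {s : Finset ℤ} (hs : 0 ∈ s) {h : ℤ → ℕ}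
    (hvan : ∀ i, i ≠ 0 → h i = 0) :
    ∑ i ∈ s, (((-1 : ℤˣ) ^ i : ℤˣ) : ℤ) * h i = h 0 := by
  rw [sum_eq_single_of_mem 0 hs fun i _ hi => by simp [hvan i hi]]
  simp

theorem le_abs_of_notMem_Icc {N i : ℤ} (hi : i ∉ Icc (-N) N) : N ≤ |i| := by
  rw [mem_Icc, ← abs_le, not_le] at hi
  exact hi.le

theorem schnell_generic_vanishing_general
    (N : ℕ)
    (Char : Type)
    (ZClosed : Set Char → Prop)          -- Zariski closed subsets of `Char(A)`
    (codim : Set Char → ℕ∞)              -- codimension of subsets of `Char(A)`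
    (h : Char → ℤ → ℕ)                   -- `h ρ i = dim_ℂ H^i(A, F ⊗ L_ρ)`
    (χF : ℤ)                             -- `χ(A, F)`
    -- basic properties of the Zariski topology on the irreducible variety `Char(A)`:
    (hclosed : ∀ i : ℤ, ZClosed {ρ | h ρ i ≠ 0})
    (hunion : ∀ S T : Set Char, ZClosed S → ZClosed T → ZClosed (S ∪ T))
    (hcodim_union : ∀ S T : Set Char, min (codim S) (codim T) ≤ codim (S ∪ T))
    (hproper : ∀ S : Set Char, ZClosed S → (1 ≤ codim S ↔ S ≠ Set.univ))
    (hgeneric : ∀ S : Set Char, ZClosed S → S ≠ Set.univ → ∃ ρ, ρ ∉ S)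
    -- `F` has bounded constructible cohomology:
    (hsupp : ∀ i : ℤ, (N : ℤ) ≤ |i| → ∀ ρ, h ρ i = 0)
    -- `χ(A, F ⊗ L_ρ)` is independent of the rank-one twist `ρ`:
    (hchi : ∀ ρ, χF = ∑ i ∈ Icc (-(N : ℤ)) N, (((-1 : ℤˣ) ^ i : ℤˣ) : ℤ) * h ρ i)
    -- Schnell's codimension bound `codim Vⁱ(A, F) ≥ |2i|`:
    (hcodim : ∀ i : ℤ, ((2 * i).natAbs : ℕ∞) ≤ codim {ρ | h ρ i ≠ 0}) :
    (∃ Z : Set Char, ZClosed Z ∧ Z ≠ Set.univ ∧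
      ∀ ρ ∉ Z, (∀ i : ℤ, i ≠ 0 → h ρ i = 0) ∧ χF = h ρ 0) ∧
    0 ≤ χF := by
  classical
  -- `1` is inserted only to keep the index set nonempty when `N = 0`.
  set S : Finset ℤ := insert 1 ((Icc (-(N : ℤ)) N).erase 0)
  have hS : S.Nonempty := insert_nonempty _ _
  set Z : Set Char := S.sup' hS fun i => {ρ | h ρ i ≠ 0}
  have hZ : ZClosed Z ∧ 1 ≤ codim Z := by
    refine closed_and_le_codim_sup' hunion hcodim_union hS fun i hi => ⟨hclosed i, ?_⟩
    have hi0 : i ≠ 0 := by rintro rfl; simp [S] at hi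
    exact le_trans (by simpa [Nat.one_le_iff_ne_zero] using hi0) (hcodim i)
  have hZne : Z ≠ Set.univ := (hproper Z hZ.1).1 hZ.2
  have hvan : ∀ ρ ∉ Z, ∀ i : ℤ, i ≠ 0 → h ρ i = 0 := by
    intro ρ hρ i hi
    by_cases hiN : i ∈ Icc (-(N : ℤ)) N
    · by_contra hne
      exact hρ (le_sup' (fun i => {ρ | h ρ i ≠ 0}) (mem_insert_of_mem (mem_erase.2 ⟨hi, hiN⟩)) hne)
    · exact hsupp i (le_abs_of_notMem_Icc hiN) ρ
  have hχ : ∀ ρ ∉ Z, χF = h ρ 0 := fun ρ hρ =>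
    (hchi ρ).trans (sum_neg_one_zpow_mul_eq_of_eq_zero (by simp) (hvan ρ hρ))
  obtain ⟨ρ, hρ⟩ := hgeneric Z hZ.1 hZne
  exact ⟨⟨Z, hZ.1, hZne, fun ρ hρ => ⟨hvan ρ hρ, hχ ρ hρ⟩⟩, hχ ρ hρ ▸ Int.natCast_nonneg _⟩

/-- Generic vanishing from Schnell's codimension bound.  Let `A` be an abelian variety of
dimension `g`, `F` a constructible complex on `A`, `Char = Char(A) ≅ (ℂ*)^{2g}` its
(irreducible, `2g`-dimensional) character variety with Zariski closed subsets and
codimension, and `h ρ i = dim H^i(A, F ⊗ L_ρ)`, so the jump loci are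
`Vⁱ(A,F) = {ρ : h ρ i ≠ 0}`.  Assume Schnell's bound `codim Vⁱ(A,F) ≥ |2i|` for all `i`.
Then there is a proper Zariski closed `Z ⊊ Char(A)` such that for all `ρ ∉ Z` one has
`H^i(A, F ⊗ L_ρ) = 0` for all `i ≠ 0` and `χ(A,F) = dim H⁰(A, F ⊗ L_ρ)`; in particular
`χ(A, F) ≥ 0`. -/
theorem schnell_generic_vanishing
    (g N : ℕ)
    (Char : Type)
    (ZClosed : Set Char → Prop)          -- Zariski closed subsets of `Char(A)`
    (codim : Set Char → ℕ∞)              -- codimension of subsets of `Char(A)`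
    (h : Char → ℤ → ℕ)                   -- `h ρ i = dim_ℂ H^i(A, F ⊗ L_ρ)`
    (χF : ℤ)                             -- `χ(A, F)`
    -- basic properties of the Zariski topology on the irreducible variety `Char(A)`:
    (hclosed : ∀ i : ℤ, ZClosed {ρ | h ρ i ≠ 0})
    (hunion : ∀ S T : Set Char, ZClosed S → ZClosed T → ZClosed (S ∪ T))
    (hcodim_union : ∀ S T : Set Char, min (codim S) (codim T) ≤ codim (S ∪ T))
    (hproper : ∀ S : Set Char, ZClosed S → (1 ≤ codim S ↔ S ≠ Set.univ))
    (hgeneric : ∀ S : Set Char, ZClosed S → S ≠ Set.univ → ∃ ρ, ρ ∉ S)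
    -- `F` has bounded constructible cohomology:
    (hsupp : ∀ i : ℤ, (N : ℤ) ≤ |i| → ∀ ρ, h ρ i = 0)
    -- `χ(A, F ⊗ L_ρ)` is independent of the rank-one twist `ρ`:
    (hchi : ∀ ρ, χF = ∑ i ∈ Icc (-(N : ℤ)) N, (((-1 : ℤˣ) ^ i : ℤˣ) : ℤ) * h ρ i)
    -- Schnell's codimension bound `codim Vⁱ(A, F) ≥ |2i|`:
    (hcodim : ∀ i : ℤ, ((2 * i).natAbs : ℕ∞) ≤ codim {ρ | h ρ i ≠ 0}) :
    (∃ Z : Set Char, ZClosed Z ∧ Z ≠ Set.univ ∧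
      ∀ ρ ∉ Z, (∀ i : ℤ, i ≠ 0 → h ρ i = 0) ∧ χF = h ρ 0) ∧
    0 ≤ χF :=
  schnell_generic_vanishing_general N Char ZClosed codim h χF hclosed hunion hcodim_union hproper
    hgeneric hsupp hchi hcodim
end
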